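/- arXiv:2005.14110 — 6 statements merged into one kernel-verified Lean document; each statement's English description precedes it below -/
import Mathlib

section
/- Let f : ℤ[x₁,…,x_N] be a nonzero polynomial of degree d over the integers. Then there exist integers a₁,…,a_N with |a_i| ≤ (d+1)/2 for all i such that f(a₁,…,a_N) ≠ 0. -/
/-!
By the combinatorial Nullstellensatz, a nonzero polynomial cannot vanish on a grid `S^N` once every
partial degree is smaller than `#S`, and each partial degree is bounded by the total degree `d`.
The integer box `[-m, m]` with `m = (d + 1) / 2` has `2m + 1 > d` points.
-/

open MvPolynomial

theorem MvPolynomial.exists_mem_finset_eval_ne_zero_of_totalDegree_lt_card {σ R : Type*}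
    [Finite σ] [CommRing R] [IsDomain R] {P : MvPolynomial σ R} (hP : P ≠ 0) (S : Finset R)
    (hS : P.totalDegree < S.card) :
    ∃ a : σ → R, (∀ i, a i ∈ S) ∧ eval a P ≠ 0 := by
  by_contra! hvanish
  exact hP <| eq_zero_of_eval_zero_at_prod_finset P (fun _ ↦ S)
    (fun i ↦ (degreeOf_le_totalDegree P i).trans_lt hS) hvanish

theorem Int.lt_card_Icc_neg_half_succ (d : ℕ) :
    d < (Finset.Icc (-(((d : ℤ) + 1) / 2)) (((d : ℤ) + 1) / 2)).card := by
  rw [Int.card_Icc]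
  omega

/-- Ellenberg--Venkatesh: a nonzero integer polynomial of total degree `d` in `N`
variables has a nonvanishing point with all coordinates of absolute value at most
`(d+1)/2`. -/
theorem stmt_0 (N d : ℕ) (P : MvPolynomial (Fin N) ℤ) (hP : P ≠ 0)
    (hd : P.totalDegree = d) :
    ∃ a : Fin N → ℤ, (∀ i, |a i| ≤ ((d : ℤ) + 1) / 2) ∧ MvPolynomial.eval a P ≠ 0 := by
  subst hd
  obtain ⟨a, ha_mem, ha_eval⟩ := exists_mem_finset_eval_ne_zero_of_totalDegree_lt_card hP _
    (Int.lt_card_Icc_neg_half_succ P.totalDegree)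
  exact ⟨a, fun i ↦ abs_le.mpr (Finset.mem_Icc.mp (ha_mem i)), ha_eval⟩
end

section
/- For n ≥ 1, define the mixed trace functions Tr_{(i,j)} : (ℂ^n)² → ℂ by Tr_{(i,j)}(x,y) = Σ_{k=1}^n x_k^i y_k^j. Let A_n be the set of the first 2n pairs (i,j) ∈ ℤ≥0² with (i,j) ≠ (0,0), ordered first by total degree i+j, then by j. Then the determinant of the 2n × 2n matrix whose rows are the gradients of Tr_{(i,j)} for (i,j) ∈ A_n (with respect to the 2n variables x₁,…,x_n,y₁,…,y_n) is not the zero polynomial. -/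
open MvPolynomial

/-- The sequence `(1,0), (0,1), (2,0), (1,1), (0,2), (3,0), …` of nonzero pairs of
nonnegative integers, listed in graded order: first by total degree `i+j`, then by `j`. -/
def pairSeq : ℕ → ℕ × ℕ
  | 0 => (1, 0)
  | k + 1 =>
      let p := pairSeq k
      if p.1 = 0 then (p.2 + 1, 0) else (p.1 - 1, p.2 + 1)

/-- The mixed trace polynomial `Tr_{(i,j)}(x, y) = ∑_{k=1}^n x_k^i y_k^j`, as a
polynomial in the `2n` variables `x_1, …, x_n, y_1, …, y_n`. -/
noncomputable def mixedTr (n : ℕ) (p : ℕ × ℕ) : MvPolynomial (Fin n ⊕ Fin n) ℂ :=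
  ∑ k : Fin n, X (Sum.inl k) ^ p.1 * X (Sum.inr k) ^ p.2

/-! ### Combinatorics of `pairSeq` -/

lemma pairSeq_succ (m : ℕ) :
    pairSeq (m + 1) = if (pairSeq m).1 = 0 then ((pairSeq m).2 + 1, 0)
      else ((pairSeq m).1 - 1, (pairSeq m).2 + 1) := rfl

lemma pairSeq_deg_pos (m : ℕ) : 1 ≤ (pairSeq m).1 + (pairSeq m).2 := by
  induction m with
  | zero => simp [pairSeq]
  | succ k ih => rw [pairSeq_succ]; split_ifs with h <;> simp <;> omega

lemma pairSeq_deg_le (m : ℕ) : (pairSeq m).1 + (pairSeq m).2 ≤ m + 1 := by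
  induction m with
  | zero => simp [pairSeq]
  | succ k ih => rw [pairSeq_succ]; split_ifs with h <;> simp <;> omega

/-- weighted degree of the `m`-th pair, with weights `A` and `A+1` -/
def cq (A m : ℕ) : ℕ := A * (pairSeq m).1 + (A + 1) * (pairSeq m).2

lemma cq_step {A : ℕ} (m : ℕ) (h : (pairSeq m).1 + (pairSeq m).2 < A) :
    cq A m < cq A (m + 1) := by
  unfold cq
  rw [pairSeq_succ]
  split_ifs with h0
  · simp only [h0]
    have hd : (pairSeq m).2 < A := by omega
    simp only [Nat.mul_zero, Nat.zero_add, Nat.add_zero, Nat.mul_succ]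
    rw [Nat.succ_mul]
    exact Nat.add_lt_add_left hd _
  · obtain ⟨i, hi⟩ : ∃ i, (pairSeq m).1 = i + 1 := ⟨(pairSeq m).1 - 1, by omega⟩
    simp only [hi, Nat.add_sub_cancel, Nat.mul_succ]
    generalize A * i = t1
    generalize (A + 1) * (pairSeq m).2 = t2
    omega

lemma cq_lt {A : ℕ} : ∀ {u v : ℕ}, u < v → v < A → cq A u < cq A v := by
  intro u v huv hvA
  induction v with
  | zero => omega
  | succ w ih =>
    have hstep : cq A w < cq A (w + 1) := cq_step w (by have := pairSeq_deg_le w; omega)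
    rcases Nat.lt_succ_iff_lt_or_eq.mp huv with h | h
    · exact lt_trans (ih h (by omega)) hstep
    · subst h; exact hstep

lemma cq_ge {A : ℕ} : ∀ {m : ℕ}, m < A → A + m ≤ cq A m := by
  intro m
  induction m with
  | zero =>
      intro _
      have h0 : pairSeq 0 = (1, 0) := rfl
      simp [cq, h0]
  | succ w ih =>
    intro h
    have hstep : cq A w < cq A (w + 1) := cq_step w (by have := pairSeq_deg_le w; omega)
    have := ih (by omega)
    omega

lemma blockdet_ne (m : ℕ) :
    (pairSeq m).1 * (pairSeq (m + 1)).2 ≠ (pairSeq (m + 1)).1 * (pairSeq m).2 := by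
  have hpos := pairSeq_deg_pos m
  rw [pairSeq_succ]
  rcases Nat.eq_zero_or_pos (pairSeq m).1 with h | h
  · rw [if_pos h]
    simp only [h, Nat.zero_mul, Nat.mul_zero]
    intro hEq
    have h2 : 1 ≤ (pairSeq m).2 := by omega
    have : 0 < ((pairSeq m).2 + 1) * (pairSeq m).2 := Nat.mul_pos (by omega) h2
    omega
  · rw [if_neg (by omega)]
    obtain ⟨i, hi⟩ : ∃ i, (pairSeq m).1 = i + 1 := ⟨(pairSeq m).1 - 1, by omega⟩
    rw [hi]
    simp only [Nat.add_sub_cancel]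
    set j := (pairSeq m).2 with hj
    have hexp : (i + 1) * (j + 1) = i * j + (i + j + 1) := by ring
    intro hEq
    rw [hexp] at hEq
    generalize i * j = t at hEq
    omega

lemma cq_sum_lt {A n a b : ℕ} (hA : A = 2 * n + 2) (hab : a ≠ b) (ha : a < 2 * n + 2)
    (hb : b < 2 * n + 2) (hnot : ¬(2 * n ≤ a ∧ 2 * n ≤ b)) :
    cq A a + cq A b < cq A (2 * n) + cq A (2 * n + 1) := by
  have mono : ∀ u v : ℕ, u < v → v ≤ 2 * n + 1 → cq A u < cq A v := by
    intro u v h1 h2; exact cq_lt h1 (by omega)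
  have mle : ∀ u v : ℕ, u ≤ v → v ≤ 2 * n + 1 → cq A u ≤ cq A v := by
    intro u v h1 h2
    rcases Nat.eq_or_lt_of_le h1 with h | h
    · subst h; exact le_refl _
    · exact le_of_lt (mono _ _ h h2)
  rcases Nat.lt_or_ge a b with h | h
  · have ha1 : a < 2 * n := by omega
    have h1 := mono a (2 * n) ha1 (by omega)
    have h2 := mle b (2 * n + 1) (by omega) (le_refl _)
    omega
  · have h' : b < a := by omega
    have hb1 : b < 2 * n := by omega
    have h1 := mono b (2 * n) hb1 (by omega)
    have h2 := mle a (2 * n + 1) (by omega) (le_refl _)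
    omega

lemma exact_x {A : ℕ} (m : ℕ) (h : 1 ≤ (pairSeq m).1) :
    A * ((pairSeq m).1 - 1) + (A + 1) * (pairSeq m).2 + A = cq A m := by
  unfold cq
  obtain ⟨s, hs⟩ : ∃ s, (pairSeq m).1 = s + 1 := ⟨(pairSeq m).1 - 1, by omega⟩
  rw [hs]
  simp only [Nat.add_sub_cancel, Nat.mul_succ]
  ring

lemma exact_y {A : ℕ} (m : ℕ) (h : 1 ≤ (pairSeq m).2) :
    A * (pairSeq m).1 + (A + 1) * ((pairSeq m).2 - 1) + (A + 1) = cq A m := by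
  unfold cq
  obtain ⟨s, hs⟩ : ∃ s, (pairSeq m).2 = s + 1 := ⟨(pairSeq m).2 - 1, by omega⟩
  rw [hs]
  simp only [Nat.add_sub_cancel, Nat.mul_succ]
  ring

/-! ### The universal matrix `G` -/

noncomputable def Ent (p : ℕ × ℕ) (v : ℕ × Bool) : MvPolynomial (ℕ × Bool) ℂ :=
  if v.2 then C (p.2 : ℂ) * X (v.1, false) ^ p.1 * X (v.1, true) ^ (p.2 - 1)
  else C (p.1 : ℂ) * X (v.1, false) ^ (p.1 - 1) * X (v.1, true) ^ p.2

def colVar (l : ℕ) : ℕ × Bool := (l / 2, l % 2 == 1)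

noncomputable def G (n : ℕ) : Matrix (Fin (2 * n)) (Fin (2 * n)) (MvPolynomial (ℕ × Bool) ℂ) :=
  Matrix.of fun m l => Ent (pairSeq (m : ℕ)) (colVar (l : ℕ))

lemma detG_base : (G 1).det ≠ 0 := by
  have e00 : G 1 0 0 = 1 := by
    show Ent (pairSeq 0) (colVar 0) = 1
    simp [Ent, colVar, pairSeq]
  have e01 : G 1 0 1 = 0 := by
    show Ent (pairSeq 0) (colVar 1) = 0
    simp [Ent, colVar, pairSeq]
  have e10 : G 1 1 0 = 0 := by
    show Ent (pairSeq 1) (colVar 0) = 0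
    have h1 : pairSeq 1 = (0, 1) := rfl
    simp [Ent, colVar, h1]
  have e11 : G 1 1 1 = 1 := by
    show Ent (pairSeq 1) (colVar 1) = 1
    have h1 : pairSeq 1 = (0, 1) := rfl
    simp [Ent, colVar, h1]
  rw [show (G 1).det = G 1 0 0 * G 1 1 1 - G 1 0 1 * G 1 1 0 from Matrix.det_fin_two (G 1)]
  rw [e00, e01, e10, e11]
  norm_num

/-! ### The one-variable substitution -/

noncomputable def phiStep (n : ℕ) :
    MvPolynomial (ℕ × Bool) ℂ →ₐ[ℂ] Polynomial (MvPolynomial (ℕ × Bool) ℂ) :=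
  aeval fun v : ℕ × Bool => if v.1 = n then
      (Polynomial.X : Polynomial (MvPolynomial (ℕ × Bool) ℂ)) ^ (if v.2 then 2*n+3 else 2*n+2)
    else Polynomial.C (X v)

def epsF (n m l : ℕ) : ℕ :=
  if l = 2*n then (2*n+2) * ((pairSeq m).1 - 1) + (2*n+3) * (pairSeq m).2
  else if l = 2*n+1 then (2*n+2) * (pairSeq m).1 + (2*n+3) * ((pairSeq m).2 - 1)
  else 0

noncomputable def gfF (n m l : ℕ) : MvPolynomial (ℕ × Bool) ℂ :=
  if l = 2*n then C (((pairSeq m).1 : ℂ))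
  else if l = 2*n+1 then C (((pairSeq m).2 : ℂ))
  else Ent (pairSeq m) (colVar l)

noncomputable def Ymat (n : ℕ) :
    Matrix (Fin (2*(n+1))) (Fin (2*(n+1))) (MvPolynomial (ℕ × Bool) ℂ) :=
  Matrix.of fun m l => if 2*n ≤ (l:ℕ) ∧ (m:ℕ) < 2*n then 0 else gfF n (m:ℕ) (l:ℕ)

lemma phiStep_C (n : ℕ) (a : ℂ) : phiStep n (C a) = Polynomial.C (C a) := by
  unfold phiStep
  rw [aeval_C]
  rw [Polynomial.algebraMap_apply, MvPolynomial.algebraMap_eq]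

lemma phiStep_X_low (n : ℕ) (u : ℕ × Bool) (h : u.1 ≠ n) :
    phiStep n (X u) = Polynomial.C (X u) := by
  unfold phiStep
  rw [aeval_X, if_neg h]

lemma phiStep_entry (n : ℕ) (m l : Fin (2*(n+1))) :
    phiStep n (G (n+1) m l) =
      Polynomial.C (gfF n (m:ℕ) (l:ℕ)) * Polynomial.X ^ (epsF n (m:ℕ) (l:ℕ)) := by
  have hGe : G (n+1) m l = Ent (pairSeq (m:ℕ)) (colVar (l:ℕ)) := rfl
  rw [hGe]
  by_cases hl0 : (l:ℕ) = 2*n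
  · have hcv : colVar (l:ℕ) = (n, false) := by
      unfold colVar
      rw [hl0]
      refine Prod.ext ?_ ?_
      · show 2 * n / 2 = n
        omega
      · show ((2 * n % 2 == 1) : Bool) = false
        have h2 : 2 * n % 2 = 0 := by omega
        rw [h2]
        rfl
    rw [hcv]
    unfold Ent
    simp only [if_neg (by simp : ¬((n, false).2 = true))]
    unfold gfF epsF
    rw [if_pos hl0, if_pos hl0]
    rw [map_mul, map_mul, map_pow, map_pow, phiStep_C]
    have hx : phiStep n (X ((n, false).1, false)) = Polynomial.X ^ (2*n+2) := by
      unfold phiStep; rw [aeval_X, if_pos rfl]; rfl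
    have hy : phiStep n (X ((n, false).1, true)) = Polynomial.X ^ (2*n+3) := by
      unfold phiStep; rw [aeval_X, if_pos rfl]; rfl
    rw [hx, hy, ← pow_mul, ← pow_mul, pow_add]
    ring
  · by_cases hl1 : (l:ℕ) = 2*n+1
    · have hcv : colVar (l:ℕ) = (n, true) := by
        unfold colVar
        rw [hl1]
        refine Prod.ext ?_ ?_
        · show (2 * n + 1) / 2 = n
          omega
        · show (((2 * n + 1) % 2 == 1) : Bool) = true
          have h2 : (2 * n + 1) % 2 = 1 := by omega
          rw [h2]
          rfl
      rw [hcv]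
      unfold Ent
      rw [if_pos (show ((n, true) : ℕ × Bool).2 = true from rfl)]
      unfold gfF epsF
      rw [if_neg hl0, if_pos hl1, if_neg hl0, if_pos hl1]
      rw [map_mul, map_mul, map_pow, map_pow, phiStep_C]
      have hx : phiStep n (X ((n, true).1, false)) = Polynomial.X ^ (2*n+2) := by
        unfold phiStep; rw [aeval_X, if_pos rfl]; rfl
      have hy : phiStep n (X ((n, true).1, true)) = Polynomial.X ^ (2*n+3) := by
        unfold phiStep; rw [aeval_X, if_pos rfl]; rfl
      rw [hx, hy, ← pow_mul, ← pow_mul, pow_add]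
      ring
    · have hlt : (l:ℕ) < 2*n := by have := l.isLt; omega
      have hk : (colVar (l:ℕ)).1 ≠ n := by
        show (l:ℕ) / 2 ≠ n
        omega
      unfold gfF epsF
      rw [if_neg hl0, if_neg hl1, if_neg hl0, if_neg hl1, pow_zero, mul_one]
      unfold Ent
      split_ifs with hb
      · rw [map_mul, map_mul, map_pow, map_pow, phiStep_C,
          phiStep_X_low n ((colVar (l:ℕ)).1, false) hk,
          phiStep_X_low n ((colVar (l:ℕ)).1, true) hk,
          ← map_pow, ← map_pow, ← map_mul, ← map_mul]
      · rw [map_mul, map_mul, map_pow, map_pow, phiStep_C,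
          phiStep_X_low n ((colVar (l:ℕ)).1, false) hk,
          phiStep_X_low n ((colVar (l:ℕ)).1, true) hk,
          ← map_pow, ← map_pow, ← map_mul, ← map_mul]

/-! ### The induction step -/

lemma detG_step (n : ℕ) (hn : 1 ≤ n) (ih : (G n).det ≠ 0) : (G (n+1)).det ≠ 0 := by
  classical
  intro hdet0
  have hge1 : (2*n+2) + 2*n ≤ cq (2*n+2) (2*n) := cq_ge (by omega)
  have hge2 : (2*n+2) + (2*n+1) ≤ cq (2*n+2) (2*n+1) := cq_ge (by omega)
  set N₀ : ℕ := cq (2*n+2) (2*n) + cq (2*n+2) (2*n+1) - (2*(2*n+2)+1) with hN₀def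
  have hN₀ : N₀ + (2*(2*n+2)+1) = cq (2*n+2) (2*n) + cq (2*n+2) (2*n+1) := by omega
  set c1 : Fin (2*(n+1)) := ⟨2*n, by omega⟩ with hc1
  set c2 : Fin (2*(n+1)) := ⟨2*n+1, by omega⟩ with hc2
  have hv1 : (c1 : ℕ) = 2*n := rfl
  have hv2 : (c2 : ℕ) = 2*n+1 := rfl
  have hc12 : c1 ≠ c2 := by
    intro h
    have := congrArg Fin.val h
    rw [hv1, hv2] at this
    omega
  have keyx : ∀ m : Fin (2*(n+1)), gfF n (m:ℕ) (2*n) ≠ 0 →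
      epsF n (m:ℕ) (2*n) + (2*n+2) = cq (2*n+2) (m:ℕ) := by
    intro m hm
    unfold gfF at hm
    rw [if_pos rfl] at hm
    have h1 : 1 ≤ (pairSeq (m:ℕ)).1 := by
      by_contra h
      push_neg at h
      have h0 : (pairSeq (m:ℕ)).1 = 0 := by omega
      apply hm
      rw [h0]
      simp
    unfold epsF
    rw [if_pos rfl]
    exact exact_x _ h1
  have keyy : ∀ m : Fin (2*(n+1)), gfF n (m:ℕ) (2*n+1) ≠ 0 →
      epsF n (m:ℕ) (2*n+1) + (2*n+3) = cq (2*n+2) (m:ℕ) := by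
    intro m hm
    unfold gfF at hm
    rw [if_neg (by omega), if_pos rfl] at hm
    have h1 : 1 ≤ (pairSeq (m:ℕ)).2 := by
      by_contra h
      push_neg at h
      have h0 : (pairSeq (m:ℕ)).2 = 0 := by omega
      apply hm
      rw [h0]
      simp
    unfold epsF
    rw [if_neg (by omega), if_pos rfl]
    exact exact_y _ h1
  have hmapdet : (phiStep n) ((G (n+1)).det) = ((G (n+1)).map (phiStep n)).det :=
    AlgHom.map_det _ _
  -- coefficient extraction
  have hcoeff : (((G (n+1)).map (phiStep n)).det).coeff N₀ = (Ymat n).det := by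
    rw [Matrix.det_apply', Matrix.det_apply', Polynomial.finset_sum_coeff]
    refine Finset.sum_congr rfl ?_
    intro σ _
    have hprod : (∏ i, ((G (n+1)).map (phiStep n)) (σ i) i) =
        Polynomial.C (∏ i, gfF n ((σ i : Fin (2*(n+1))) : ℕ) ((i : Fin (2*(n+1))) : ℕ)) *
          Polynomial.X ^ (∑ i, epsF n ((σ i : Fin (2*(n+1))) : ℕ) ((i : Fin (2*(n+1))) : ℕ)) := by
      calc (∏ i, ((G (n+1)).map (phiStep n)) (σ i) i)
          = ∏ i, (Polynomial.C (gfF n ((σ i : Fin (2*(n+1))) : ℕ) ((i : Fin (2*(n+1))) : ℕ)) *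
              Polynomial.X ^ epsF n ((σ i : Fin (2*(n+1))) : ℕ) ((i : Fin (2*(n+1))) : ℕ)) :=
            Finset.prod_congr rfl fun i _ => by
              rw [Matrix.map_apply]; exact phiStep_entry n (σ i) i
        _ = (∏ i, Polynomial.C (gfF n ((σ i : Fin (2*(n+1))) : ℕ) ((i : Fin (2*(n+1))) : ℕ))) *
              ∏ i, Polynomial.X ^ epsF n ((σ i : Fin (2*(n+1))) : ℕ) ((i : Fin (2*(n+1))) : ℕ) :=
            Finset.prod_mul_distrib
        _ = _ := by rw [← map_prod, Finset.prod_pow_eq_pow_sum]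
    rw [hprod]
    rw [Polynomial.coeff_intCast_mul, Polynomial.coeff_C_mul, Polynomial.coeff_X_pow]
    have hsum : (∑ i, epsF n ((σ i : Fin (2*(n+1))) : ℕ) ((i : Fin (2*(n+1))) : ℕ)) =
        epsF n ((σ c1 : Fin (2*(n+1))) : ℕ) (2*n) + epsF n ((σ c2 : Fin (2*(n+1))) : ℕ) (2*n+1) := by
      have h2 : ∀ x : Fin (2*(n+1)), x ∉ ({c1, c2} : Finset (Fin (2*(n+1)))) →
          epsF n ((σ x : Fin (2*(n+1))) : ℕ) ((x : Fin (2*(n+1))) : ℕ) = 0 := by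
        intro x hx
        simp only [Finset.mem_insert, Finset.mem_singleton] at hx
        push_neg at hx
        have h1 : (x:ℕ) ≠ 2*n := fun h => hx.1 (Fin.ext h)
        have h2 : (x:ℕ) ≠ 2*n+1 := fun h => hx.2 (Fin.ext h)
        unfold epsF
        rw [if_neg h1, if_neg h2]
      rw [← Finset.sum_subset (Finset.subset_univ ({c1, c2} : Finset (Fin (2*(n+1)))))
        (fun x _ hx => h2 x hx)]
      rw [Finset.sum_pair hc12]
    by_cases hzero : ∀ i, gfF n ((σ i : Fin (2*(n+1))) : ℕ) ((i : Fin (2*(n+1))) : ℕ) ≠ 0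
    · by_cases hgood : (σ c1 = c1 ∧ σ c2 = c2) ∨ (σ c1 = c2 ∧ σ c2 = c1)
      · have hSig : (∑ i, epsF n ((σ i : Fin (2*(n+1))) : ℕ) ((i : Fin (2*(n+1))) : ℕ)) = N₀ := by
          rw [hsum]
          rcases hgood with ⟨h1, h2⟩ | ⟨h1, h2⟩
          · have e1 := keyx (σ c1) (hzero c1)
            have e2 := keyy (σ c2) (hzero c2)
            rw [h1, hv1] at e1
            rw [h2, hv2] at e2
            rw [h1, h2, hv1, hv2]
            omega
          · have e1 := keyx (σ c1) (hzero c1)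
            have e2 := keyy (σ c2) (hzero c2)
            rw [h1, hv2] at e1
            rw [h2, hv1] at e2
            rw [h1, h2, hv1, hv2]
            omega
        rw [if_pos hSig.symm, mul_one]
        congr 1
        refine Finset.prod_congr rfl fun i _ => ?_
        show gfF n ((σ i : Fin (2*(n+1))) : ℕ) ((i : Fin (2*(n+1))) : ℕ) = Ymat n (σ i) i
        have hcond : ¬(2*n ≤ ((i : Fin (2*(n+1))) : ℕ) ∧ ((σ i : Fin (2*(n+1))) : ℕ) < 2*n) := by
          rintro ⟨hi1, hi2⟩
          have hii : i = c1 ∨ i = c2 := by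
            have := i.isLt
            rcases (by omega : (i:ℕ) = 2*n ∨ (i:ℕ) = 2*n+1) with h | h
            · exact Or.inl (Fin.ext h)
            · exact Or.inr (Fin.ext h)
          have hσv : ((σ i : Fin (2*(n+1))) : ℕ) = 2*n ∨ ((σ i : Fin (2*(n+1))) : ℕ) = 2*n+1 := by
            rcases hii with h | h <;> subst h <;>
              rcases hgood with ⟨h1, h2⟩ | ⟨h1, h2⟩ <;> simp [h1, h2, hv1, hv2]
          omega
        unfold Ymat
        rw [Matrix.of_apply, if_neg hcond]
      · have hnev : ((σ c1 : Fin (2*(n+1))) : ℕ) ≠ ((σ c2 : Fin (2*(n+1))) : ℕ) := by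
          intro h
          exact hc12 (σ.injective (Fin.ext h))
        have hnot : ¬(2*n ≤ ((σ c1 : Fin (2*(n+1))) : ℕ) ∧ 2*n ≤ ((σ c2 : Fin (2*(n+1))) : ℕ)) := by
          rintro ⟨h1, h2⟩
          have hb1 := (σ c1).isLt
          have hb2 := (σ c2).isLt
          apply hgood
          rcases (by omega : ((σ c1 : Fin (2*(n+1))) : ℕ) = 2*n ∧ ((σ c2 : Fin (2*(n+1))) : ℕ) = 2*n+1 ∨
              ((σ c1 : Fin (2*(n+1))) : ℕ) = 2*n+1 ∧ ((σ c2 : Fin (2*(n+1))) : ℕ) = 2*n) with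
            ⟨ha, hb⟩ | ⟨ha, hb⟩
          · exact Or.inl ⟨Fin.ext ha, Fin.ext hb⟩
          · exact Or.inr ⟨Fin.ext ha, Fin.ext hb⟩
        have hSig : (∑ i, epsF n ((σ i : Fin (2*(n+1))) : ℕ) ((i : Fin (2*(n+1))) : ℕ)) ≠ N₀ := by
          have e1 := keyx (σ c1) (hzero c1)
          have e2 := keyy (σ c2) (hzero c2)
          have hlt := cq_sum_lt (A := 2*n+2) (n := n) rfl hnev
            (by have := (σ c1).isLt; omega) (by have := (σ c2).isLt; omega) hnot
          rw [hsum]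
          omega
        rw [if_neg (fun h => hSig h.symm), mul_zero, mul_zero]
        obtain ⟨i₀, hi₀c, hi₀r⟩ : ∃ i₀ : Fin (2*(n+1)),
            2*n ≤ (i₀:ℕ) ∧ ((σ i₀ : Fin (2*(n+1))) : ℕ) < 2*n := by
          rcases Nat.lt_or_ge ((σ c1 : Fin (2*(n+1))) : ℕ) (2*n) with h | h
          · exact ⟨c1, by rw [hv1], h⟩
          · have h2 : ((σ c2 : Fin (2*(n+1))) : ℕ) < 2*n := by
              by_contra h2
              push_neg at h2
              exact hnot ⟨h, h2⟩
            exact ⟨c2, by rw [hv2]; omega, h2⟩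
        have hY0 : ∏ i, Ymat n (σ i) i = 0 := by
          apply Finset.prod_eq_zero (Finset.mem_univ i₀)
          show Ymat n (σ i₀) i₀ = 0
          unfold Ymat
          rw [Matrix.of_apply, if_pos ⟨hi₀c, hi₀r⟩]
        rw [hY0, mul_zero]
    · push_neg at hzero
      obtain ⟨i₀, h0⟩ := hzero
      rw [Finset.prod_eq_zero (Finset.mem_univ i₀) h0, zero_mul, mul_zero]
      have hY0 : ∏ i, Ymat n (σ i) i = 0 := by
        apply Finset.prod_eq_zero (Finset.mem_univ i₀)
        show Ymat n (σ i₀) i₀ = 0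
        unfold Ymat
        rw [Matrix.of_apply]
        split_ifs
        · rfl
        · exact h0
      rw [hY0, mul_zero]
  -- block structure of Y
  have hEb : (2*n) + 2 = 2*(n+1) := by ring
  let Eb : (Fin (2*n) ⊕ Fin 2) ≃ Fin (2*(n+1)) := finSumFinEquiv.trans (finCongr hEb)
  have hEbl : ∀ j : Fin (2*n), ((Eb (Sum.inl j)) : ℕ) = (j:ℕ) := by
    intro j
    simp only [Eb, Equiv.trans_apply, finCongr_apply, Fin.coe_cast,
      finSumFinEquiv_apply_left, Fin.coe_castAdd]
  have hEbr : ∀ j : Fin 2, ((Eb (Sum.inr j)) : ℕ) = 2*n + (j:ℕ) := by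
    intro j
    simp only [Eb, Equiv.trans_apply, finCongr_apply, Fin.coe_cast,
      finSumFinEquiv_apply_right, Fin.coe_natAdd]
  set Dm : Matrix (Fin 2) (Fin 2) (MvPolynomial (ℕ × Bool) ℂ) :=
    Matrix.of ![![C (((pairSeq (2*n)).1 : ℂ)), C (((pairSeq (2*n)).2 : ℂ))],
                 ![C (((pairSeq (2*n+1)).1 : ℂ)), C (((pairSeq (2*n+1)).2 : ℂ))]] with hDm
  have hsub : (Ymat n).submatrix Eb Eb
      = Matrix.fromBlocks (G n) 0
          (Matrix.of fun (i : Fin 2) (j : Fin (2*n)) =>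
            (Ymat n) (Eb (Sum.inr i)) (Eb (Sum.inl j))) Dm := by
    apply Matrix.ext
    intro i j
    rcases i with i | i <;> rcases j with j | j
    · simp only [Matrix.submatrix_apply, Matrix.fromBlocks_apply₁₁]
      have hj := j.isLt
      have hi := i.isLt
      show Ymat n (Eb (Sum.inl i)) (Eb (Sum.inl j)) = G n i j
      unfold Ymat
      rw [Matrix.of_apply, if_neg (by rw [hEbl, hEbl]; omega)]
      unfold gfF
      rw [hEbl, hEbl, if_neg (by omega), if_neg (by omega)]
      rfl
    · simp only [Matrix.submatrix_apply, Matrix.fromBlocks_apply₁₂, Matrix.zero_apply]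
      show Ymat n (Eb (Sum.inl i)) (Eb (Sum.inr j)) = 0
      unfold Ymat
      rw [Matrix.of_apply, if_pos (by rw [hEbl, hEbr]; constructor <;> [omega; exact i.isLt])]
    · simp only [Matrix.submatrix_apply, Matrix.fromBlocks_apply₂₁, Matrix.of_apply]
    · simp only [Matrix.submatrix_apply, Matrix.fromBlocks_apply₂₂]
      show Ymat n (Eb (Sum.inr i)) (Eb (Sum.inr j)) = Dm i j
      unfold Ymat
      rw [Matrix.of_apply, if_neg (by rw [hEbr, hEbr]; omega)]
      unfold gfF
      fin_cases i <;> fin_cases j <;>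
        simp [hDm, hEbr, Nat.add_mod_left] <;>
        rw [hEbr, hEbr] <;> norm_num
  have hYdet : (Ymat n).det = (G n).det * Dm.det := by
    rw [← Matrix.det_submatrix_equiv_self Eb (Ymat n), hsub, Matrix.det_fromBlocks_zero₁₂]
  have hDdet : Dm.det ≠ 0 := by
    rw [Matrix.det_fin_two]
    have d00 : Dm 0 0 = C (((pairSeq (2*n)).1 : ℂ)) := rfl
    have d01 : Dm 0 1 = C (((pairSeq (2*n)).2 : ℂ)) := rfl
    have d10 : Dm 1 0 = C (((pairSeq (2*n+1)).1 : ℂ)) := rfl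
    have d11 : Dm 1 1 = C (((pairSeq (2*n+1)).2 : ℂ)) := rfl
    rw [d00, d01, d10, d11, ← map_mul, ← map_mul, ← map_sub]
    rw [Ne, MvPolynomial.C_eq_zero, sub_eq_zero]
    intro h
    have h3 : (pairSeq (2*n)).1 * (pairSeq (2*n+1)).2 =
        (pairSeq (2*n)).2 * (pairSeq (2*n+1)).1 := by exact_mod_cast h
    exact blockdet_ne (2*n) (by rw [h3, Nat.mul_comm])
  have h2 : ((G (n+1)).map (phiStep n)).det = 0 := by
    rw [← hmapdet, hdet0, map_zero]
  have h3 : (Ymat n).det = 0 := by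
    rw [← hcoeff, h2, Polynomial.coeff_zero]
  rw [hYdet] at h3
  rcases mul_eq_zero.mp h3 with h | h
  · exact ih h
  · exact hDdet h

lemma detG_ne_zero : ∀ n : ℕ, 1 ≤ n → (G n).det ≠ 0 := by
  intro n
  induction n with
  | zero => omega
  | succ m ihm =>
    intro _
    rcases Nat.eq_zero_or_pos m with h | h
    · subst h
      exact detG_base
    · exact detG_step m h (ihm h)

/-! ### Bridge to the original statement -/

section helper
variable {R : Type*} [CommRing R] {α β : Type*} [DecidableEq α] [Fintype α]
  [DecidableEq β] [Fintype β]

lemma det_submatrix_equiv_equiv (A : Matrix β β R) (e₁ e₂ : α ≃ β) :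
    (A.submatrix e₁ e₂).det = (Equiv.Perm.sign (e₁.trans e₂.symm)) * A.det := by
  have h : A.submatrix e₁ e₂ =
      (A.submatrix e₂ e₂).submatrix (e₁.trans e₂.symm : Equiv.Perm α) id := by
    ext i j
    simp [Matrix.submatrix_apply]
  rw [h, Matrix.det_permute, Matrix.det_submatrix_equiv_self]
end helper

def hmap (n : ℕ) : (Fin n ⊕ Fin n) → ℕ × Bool :=
  Sum.elim (fun k => ((k : ℕ), false)) (fun k => ((k : ℕ), true))

def rowE (n : ℕ) : (Fin n ⊕ Fin n) ≃ Fin (2 * n) :=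
  finSumFinEquiv.trans (finCongr (two_mul n).symm)

def colE (n : ℕ) : (Fin n ⊕ Fin n) ≃ Fin (2 * n) where
  toFun v := Sum.elim (fun (k : Fin n) => (⟨2 * (k : ℕ), by have := k.isLt; omega⟩ : Fin (2 * n)))
    (fun (k : Fin n) => (⟨2 * (k : ℕ) + 1, by have := k.isLt; omega⟩ : Fin (2 * n))) v
  invFun l := if (l : ℕ) % 2 = 0 then Sum.inl ⟨(l : ℕ) / 2, by have := l.isLt; omega⟩
    else Sum.inr ⟨(l : ℕ) / 2, by have := l.isLt; omega⟩
  left_inv := by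
    rintro (k | k) <;> dsimp only [Sum.elim_inl, Sum.elim_inr]
    · rw [if_pos (by omega)]
      congr 1
      exact Fin.ext (by simp only [Fin.val_mk]; omega)
    · rw [if_neg (by omega)]
      congr 1
      exact Fin.ext (by simp only [Fin.val_mk]; omega)
  right_inv := by
    intro l
    dsimp only
    by_cases h : (l : ℕ) % 2 = 0
    · rw [if_pos h]
      dsimp only [Sum.elim_inl]
      exact Fin.ext (by simp only [Fin.val_mk]; omega)
    · rw [if_neg h]
      dsimp only [Sum.elim_inr]
      exact Fin.ext (by simp only [Fin.val_mk]; omega)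

lemma pderiv_mixedTr_inl (n : ℕ) (p : ℕ × ℕ) (k : Fin n) :
    pderiv (Sum.inl k) (mixedTr n p) =
      C ((p.1 : ℕ) : ℂ) * X (Sum.inl k) ^ (p.1 - 1) * X (Sum.inr k) ^ p.2 := by
  unfold mixedTr
  rw [map_sum]
  rw [Finset.sum_eq_single k]
  · rw [pderiv_mul, pderiv_pow, pderiv_pow, pderiv_X_self,
      pderiv_X_of_ne (by simp : (Sum.inr k : Fin n ⊕ Fin n) ≠ Sum.inl k)]
    rw [map_natCast C p.1]
    ring
  · intro b _ hb
    rw [pderiv_mul, pderiv_pow, pderiv_pow,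
      pderiv_X_of_ne (by simp [hb] : (Sum.inl b : Fin n ⊕ Fin n) ≠ Sum.inl k),
      pderiv_X_of_ne (by simp : (Sum.inr b : Fin n ⊕ Fin n) ≠ Sum.inl k)]
    ring
  · intro h; exact absurd (Finset.mem_univ k) h

lemma pderiv_mixedTr_inr (n : ℕ) (p : ℕ × ℕ) (k : Fin n) :
    pderiv (Sum.inr k) (mixedTr n p) =
      C ((p.2 : ℕ) : ℂ) * X (Sum.inl k) ^ p.1 * X (Sum.inr k) ^ (p.2 - 1) := by
  unfold mixedTr
  rw [map_sum]
  rw [Finset.sum_eq_single k]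
  · rw [pderiv_mul, pderiv_pow, pderiv_pow, pderiv_X_self,
      pderiv_X_of_ne (by simp : (Sum.inl k : Fin n ⊕ Fin n) ≠ Sum.inr k)]
    rw [map_natCast C p.2]
    ring
  · intro b _ hb
    rw [pderiv_mul, pderiv_pow, pderiv_pow,
      pderiv_X_of_ne (by simp [hb] : (Sum.inr b : Fin n ⊕ Fin n) ≠ Sum.inr k),
      pderiv_X_of_ne (by simp : (Sum.inl b : Fin n ⊕ Fin n) ≠ Sum.inr k)]
    ring
  · intro h; exact absurd (Finset.mem_univ k) h

lemma bridge (n : ℕ) :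
    (rename (hmap n)) ((Matrix.of fun v w : Fin n ⊕ Fin n =>
        pderiv w (mixedTr n (pairSeq (finSumFinEquiv v)))).det)
      = ((G n).submatrix (rowE n) (colE n)).det := by
  rw [AlgHom.map_det]
  congr 1
  rw [AlgHom.mapMatrix_apply]
  apply Matrix.ext
  intro v w
  have hrow : ((rowE n) v : ℕ) = (finSumFinEquiv v : ℕ) := by simp [rowE]
  rcases w with k | k
  · have hcol : colVar ((colE n) (Sum.inl k) : ℕ) = ((k : ℕ), false) := by
      have h1 : ((colE n) (Sum.inl k) : ℕ) = 2 * (k : ℕ) := rfl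
      rw [h1]
      unfold colVar
      congr 1
      · omega
      · simp [Nat.mul_mod_right]
    rw [Matrix.map_apply, Matrix.of_apply, pderiv_mixedTr_inl]
    rw [Matrix.submatrix_apply]
    show _ = Ent (pairSeq ((rowE n) v : ℕ)) (colVar ((colE n) (Sum.inl k) : ℕ))
    rw [hcol, hrow]
    rw [map_mul, map_mul, map_pow, map_pow, rename_C, rename_X, rename_X]
    simp only [hmap, Sum.elim_inl, Sum.elim_inr]
    simp [Ent]
  · have hcol : colVar ((colE n) (Sum.inr k) : ℕ) = ((k : ℕ), true) := by
      have h1 : ((colE n) (Sum.inr k) : ℕ) = 2 * (k : ℕ) + 1 := rfl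
      rw [h1]
      unfold colVar
      congr 1
      · omega
      · simp [Nat.mul_add_mod]
    rw [Matrix.map_apply, Matrix.of_apply, pderiv_mixedTr_inr]
    rw [Matrix.submatrix_apply]
    show _ = Ent (pairSeq ((rowE n) v : ℕ)) (colVar ((colE n) (Sum.inr k) : ℕ))
    rw [hcol, hrow]
    rw [map_mul, map_mul, map_pow, map_pow, rename_C, rename_X, rename_X]
    simp only [hmap, Sum.elim_inl, Sum.elim_inr]
    simp [Ent]

/-- The `2n × 2n` matrix whose rows are the gradients of the mixed traces
`Tr_{(i,j)}` for `(i,j)` ranging over the first `2n` nonzero pairs in graded order has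
nonzero determinant as a polynomial. -/
theorem stmt_3 (n : ℕ) (hn : 1 ≤ n) :
    Matrix.det (Matrix.of fun v w : Fin n ⊕ Fin n =>
      pderiv w (mixedTr n (pairSeq (finSumFinEquiv v)))) ≠ 0 := by
  intro h0
  have hb := bridge n
  rw [h0, map_zero] at hb
  have hsubdet := det_submatrix_equiv_equiv (G n) (rowE n) (colE n)
  rw [← hb] at hsubdet
  have hG := detG_ne_zero n hn
  rcases Int.units_eq_one_or (Equiv.Perm.sign ((rowE n).trans (colE n).symm)) with h | h <;>
      rw [h] at hsubdet
  · simp only [Units.val_one, Int.cast_one, one_mul] at hsubdet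
    exact hG hsubdet.symm
  · simp only [Units.val_neg, Units.val_one, Int.cast_neg, Int.cast_one, neg_mul, one_mul,
      zero_eq_neg] at hsubdet
    exact hG hsubdet
end

section
/- Let A_n be the set of the first 2n nonzero pairs (i,j) ∈ ℤ≥0² in graded order (ordered by i+j, then by j), and let d be the least integer with C(d+2,2) ≥ 2n+1. Then Σ_{(i,j) ∈ A_n} (i+j) = 2nd − d(d−1)(d+4)/6. -/
def rowStart (m : ℕ) : ℕ := (m+1)*(m+2)/2 - 1

lemma rowStart_succ (m : ℕ) : rowStart (m+1) = rowStart m + (m+2) := by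
  simp only [rowStart]
  have h1 : (m+1)*(m+2) = m*m+3*m+2 := by ring
  have h2 : (m+1+1)*(m+1+2) = m*m+5*m+6 := by ring
  rw [h1, h2]
  omega

lemma pairRow : ∀ m, ∀ r, r ≤ m+1 → pairSeq (rowStart m + r) = (m+1-r, r) := by
  intro m
  induction m with
  | zero =>
    intro r hr
    interval_cases r <;> simp [rowStart, pairSeq]
  | succ m ih =>
    have hstart : pairSeq (rowStart (m+1)) = (m+2, 0) := by
      have h1 := ih (m+1) le_rfl
      have h2 : rowStart (m+1) = (rowStart m + (m+1)) + 1 := by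
        rw [rowStart_succ]; omega
      rw [h2, pairSeq]
      simp [h1]
    intro r
    induction r with
    | zero => simpa using hstart
    | succ r ihr =>
      intro hr
      have h3 := ihr (by omega)
      have h4 : rowStart (m+1) + (r+1) = (rowStart (m+1) + r) + 1 := rfl
      rw [h4, pairSeq]
      simp only [h3]
      have : m + 2 - r ≠ 0 := by omega
      simp [this]
      omega

lemma sum_row (m : ℕ) :
    ∑ k ∈ Finset.range (rowStart m), ((pairSeq k).1 + (pairSeq k).2)
      = ∑ j ∈ Finset.range m, (j+1)*(j+2) := by
  induction m with
  | zero => simp [rowStart]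
  | succ m ih =>
    rw [rowStart_succ m, Finset.sum_range_add, ih]
    have h : ∀ x ∈ Finset.range (m+2),
        (pairSeq (rowStart m + x)).1 + (pairSeq (rowStart m + x)).2 = m+1 := by
      intro x hx
      rw [Finset.mem_range] at hx
      rw [pairRow m x (by omega)]
      simp; omega
    rw [Finset.sum_congr rfl h, Finset.sum_const, Finset.card_range, smul_eq_mul,
      Finset.sum_range_succ]
    ring

lemma three_sum (m : ℕ) :
    3 * ∑ j ∈ Finset.range m, (j+1)*(j+2) = m*(m+1)*(m+2) := by
  induction m with
  | zero => simp
  | succ m ih => rw [Finset.sum_range_succ, Nat.mul_add, ih]; ring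

lemma choose2 (k : ℕ) : 2 * Nat.choose (k+2) 2 = (k+1)*(k+2) := by
  induction k with
  | zero => rfl
  | succ k ih =>
    rw [show k+1+2 = (k+2)+1 from rfl, Nat.choose_succ_succ, Nat.mul_add,
      Nat.choose_one_right, ih]
    ring

/-- If `A_n` consists of the first `2n` nonzero pairs in graded order and `d` is the
least integer with `C(d+2,2) ≥ 2n+1`, then `∑_{(i,j) ∈ Aₙ} (i+j) = 2nd − d(d−1)(d+4)/6`. -/
theorem stmt_6 (n : ℕ) (hn : 1 ≤ n) (d : ℕ)
    (hd : Nat.choose (d + 2) 2 ≥ 2 * n + 1)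
    (hdmin : ∀ d' : ℕ, d' < d → ¬ (Nat.choose (d' + 2) 2 ≥ 2 * n + 1)) :
    (∑ k ∈ Finset.range (2 * n), ((pairSeq k).1 + (pairSeq k).2) : ℚ) =
      2 * n * d - d * (d - 1) * (d + 4) / 6 := by
  have hd1 : 1 ≤ d := by
    rcases Nat.eq_zero_or_pos d with h0 | h
    · subst h0
      have : Nat.choose (0+2) 2 = 1 := rfl
      omega
    · exact h
  obtain ⟨m, rfl⟩ : ∃ m, d = m + 1 := ⟨d - 1, by omega⟩
  -- bounds from minimality
  have hup : (m+2)*(m+3) ≥ 4*n + 2 := by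
    have h := choose2 (m+1)
    rw [show (m+1+1)*(m+1+2) = (m+2)*(m+3) from by ring] at h
    omega
  have hlow : (m+1)*(m+2) ≤ 4*n := by
    have h1 := hdmin m (by omega)
    have h2 := choose2 m
    omega
  set s := rowStart m with hsdef
  have hs : 2*s + 2 = (m+1)*(m+2) := by
    have hev : 2 ∣ (m+1)*(m+2) := (Nat.even_mul_succ_self (m+1)).two_dvd
    have h2 : 2 ≤ (m+1)*(m+2) := le_trans (by omega : 2 ≤ m+2) (Nat.le_mul_of_pos_left _ (by omega))
    simp only [hsdef, rowStart]
    omega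
  have hsn : s + 1 ≤ 2*n := by omega
  set r := 2*n - s with hrdef
  have hrle : r ≤ m + 2 := by
    have hpoly : (m+2)*(m+3) = (m+1)*(m+2) + 2*(m+2) := by ring
    omega
  set T := ∑ j ∈ Finset.range m, (j+1)*(j+2) with hTdef
  have key : ∑ k ∈ Finset.range (2*n), ((pairSeq k).1 + (pairSeq k).2)
      = T + r*(m+1) := by
    rw [show 2*n = s + r by omega, Finset.sum_range_add, sum_row]
    congr 1
    have h : ∀ x ∈ Finset.range r,
        (pairSeq (rowStart m + x)).1 + (pairSeq (rowStart m + x)).2 = m+1 := by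
      intro x hx
      rw [Finset.mem_range] at hx
      rw [pairRow m x (by omega)]
      simp; omega
    rw [Finset.sum_congr rfl h, Finset.sum_const, Finset.card_range, smul_eq_mul]
  have keyQ : (∑ k ∈ Finset.range (2*n), ((pairSeq k).1 + (pairSeq k).2 : ℚ))
      = (T : ℚ) + r*(m+1) := by exact_mod_cast congrArg (Nat.cast : ℕ → ℚ) key
  rw [keyQ]
  have hTQ : 3 * (T : ℚ) = m*(m+1)*(m+2) := by exact_mod_cast three_sum m
  have hsQ : 2*(s:ℚ) + 2 = (m+1)*(m+2) := by exact_mod_cast hs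
  have hrQ : (r : ℚ) = 2*n - s := by
    rw [hrdef]; push_cast [Nat.cast_sub (by omega : s ≤ 2*n)]; ring
  push_cast
  linear_combination (1/3:ℚ)*hTQ + ((m:ℚ)+1)*hrQ - (((m:ℚ)+1)/2)*hsQ
end

section
/- For every integer n > e^12, setting d = r − 1 = ⌈log n⌉, one has C(2d,d) ≥ r·n and d·r < 1.564·(log n)². -/
/-!
Since `d ≥ log n` we have `n ≤ e^d`, so the first claim follows from `(d + 1) e^d ≤ C(2d, d)` for
`d ≥ 13`. That holds at `d = 13` numerically, and it propagates because the ratio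
`C(2k+2, k+1) / C(2k, k) = 2 (2k + 1) / (k + 1)` exceeds `e (k + 2) / (k + 1)` once `k ≥ 3`.
The second claim is `d (d + 1) < (L + 1)(L + 2) < 1.564 L²` for `L = log n > 12`.
-/

open Real

lemma add_two_mul_exp_one_le {k : ℕ} (hk : 3 ≤ k) :
    ((k : ℝ) + 2) * exp 1 ≤ 2 * (2 * k + 1) := by
  have he := exp_one_lt_d9
  have hk' : (3 : ℝ) ≤ k := by exact_mod_cast hk
  nlinarith

lemma add_two_mul_exp_succ_le_centralBinom_succ {k : ℕ} (hk : 3 ≤ k)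
    (ih : ((k : ℝ) + 1) * exp k ≤ Nat.centralBinom k) :
    ((k : ℝ) + 2) * exp (k + 1) ≤ Nat.centralBinom (k + 1) := by
  have hrec : ((k : ℝ) + 1) * Nat.centralBinom (k + 1) = 2 * (2 * k + 1) * Nat.centralBinom k := by
    exact_mod_cast Nat.succ_mul_centralBinom_succ k
  have hfactor := add_two_mul_exp_one_le hk
  have hk0 : (0 : ℝ) < k + 1 := by positivity
  refine le_of_mul_le_mul_left ?_ hk0
  calc ((k : ℝ) + 1) * (((k : ℝ) + 2) * exp (k + 1))
      = ((k : ℝ) + 2) * exp 1 * (((k : ℝ) + 1) * exp k) := by rw [exp_add]; ring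
    _ ≤ 2 * (2 * k + 1) * Nat.centralBinom k :=
        mul_le_mul hfactor ih (by positivity) (by positivity)
    _ = ((k : ℝ) + 1) * Nat.centralBinom (k + 1) := hrec.symm

lemma fourteen_mul_exp_thirteen_le_centralBinom :
    14 * exp 13 ≤ Nat.centralBinom 13 := by
  have hcb : (Nat.centralBinom 13 : ℝ) = 10400600 := by norm_num [Nat.centralBinom, Nat.choose]
  have hexp : exp 13 = exp 1 ^ 13 := by rw [← exp_nat_mul]; norm_num
  have hbound : exp 1 ^ 13 ≤ (2.7182818286 : ℝ) ^ 13 :=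
    pow_le_pow_left₀ (exp_pos 1).le exp_one_lt_d9.le 13
  rw [hcb, hexp]
  norm_num at hbound ⊢
  linarith

lemma succ_mul_exp_le_centralBinom {d : ℕ} (hd : 13 ≤ d) :
    ((d : ℝ) + 1) * exp d ≤ Nat.centralBinom d := by
  induction d, hd using Nat.le_induction with
  | base => norm_num [fourteen_mul_exp_thirteen_le_centralBinom]
  | succ k hk ih =>
    push_cast
    linarith [add_two_mul_exp_succ_le_centralBinom_succ (by omega) ih]

lemma natCeil_mul_succ_lt {x : ℝ} (hx : 12 < x) :
    (⌈x⌉₊ : ℝ) * (⌈x⌉₊ + 1) < 1.564 * x ^ 2 := by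
  have hlt : (⌈x⌉₊ : ℝ) < x + 1 := Nat.ceil_lt_add_one (by linarith)
  have hge : x ≤ ⌈x⌉₊ := Nat.le_ceil x
  nlinarith

/-- For `n > e^12`, setting `d = r − 1 = ⌈log n⌉`, one has `C(2d,d) ≥ r·n` and
`d·r < 1.564·(log n)²`. -/
theorem stmt_9 (n : ℕ) (hn : (n : ℝ) > Real.exp 12)
    (d r : ℕ) (hd : d = ⌈Real.log n⌉₊) (hr : r = d + 1) :
    Nat.choose (2 * d) d ≥ r * n ∧
      (d : ℝ) * r < 1.564 * (Real.log n) ^ 2 := by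
  have hn0 : (0 : ℝ) < n := (exp_pos 12).trans hn
  have hlog : 12 < log n := by simpa using log_lt_log (exp_pos 12) hn
  subst hd hr
  refine ⟨?_, by exact_mod_cast natCeil_mul_succ_lt hlog⟩
  have hd13 : 13 ≤ ⌈log n⌉₊ := Nat.lt_ceil.mpr (by exact_mod_cast hlog)
  have hn_le : (n : ℝ) ≤ exp ⌈log n⌉₊ :=
    (exp_log hn0).symm.le.trans (exp_le_exp.mpr (Nat.le_ceil _))
  have hreal : ((⌈log n⌉₊ + 1 : ℕ) : ℝ) * n ≤ Nat.centralBinom ⌈log n⌉₊ := by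
    push_cast
    exact (mul_le_mul_of_nonneg_left hn_le (by positivity)).trans
      (succ_mul_exp_le_centralBinom hd13)
  exact_mod_cast hreal
end

section
/- Fix α = β = 1/(2 log 2). Then (α+β)·log(α+β) − α·log α − β·log β = 1, and for all positive reals α', β' satisfying (α'+β')·log(α'+β') − α'·log α' − β'·log β' = 1, one has α'·β' ≥ α·β = 1/(4 (log 2)²). -/
/-!
Write `F(a, b) = (a + b) log (a + b) - a log a - b log b`. It is symmetric and homogeneous of
degree one, with `F(a, a) = 2 log 2 · a`, so everything follows from `F(a, b) ≤ 2 log 2 · √(ab)`: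
then `F(α', β') = 1` forces `4 (log 2)² α'β' ≥ 1`. Scaling to `b = 1` and `a = x²` with `x ≥ 1`,
this says that `F(x², 1) / x` never exceeds its value `2 log 2` at `x = 1`. That ratio is antitone
on `[1, ∞)`: with `w = x²` its derivative has the sign of `(w - 1) log (w + 1) - w log w`, which is
nonpositive by the elementary bounds `log (1 + 1/w) ≤ 1/w` and `1 - 1/w ≤ log w`.
-/

open Real

noncomputable def pairEntropy (a b : ℝ) : ℝ := (a + b) * log (a + b) - a * log a - b * log b

lemma pairEntropy_eq_negMulLog (a b : ℝ) :
    pairEntropy a b = negMulLog a + negMulLog b - negMulLog (a + b) := by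
  simp only [pairEntropy, negMulLog]
  ring

lemma pairEntropy_comm (a b : ℝ) : pairEntropy a b = pairEntropy b a := by
  simp only [pairEntropy, add_comm a b]
  ring

lemma pairEntropy_mul_mul (c a b : ℝ) : pairEntropy (c * a) (c * b) = c * pairEntropy a b := by
  simp only [pairEntropy_eq_negMulLog, ← mul_add, negMulLog_mul]
  ring

lemma pairEntropy_self (a : ℝ) : pairEntropy a a = 2 * log 2 * a := by
  have h := pairEntropy_mul_mul a 1 1
  rw [mul_one] at h
  rw [h, pairEntropy]
  norm_num
  ring

lemma sub_one_mul_log_add_one_le {w : ℝ} (hw : 1 ≤ w) : (w - 1) * log (w + 1) ≤ w * log w := by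
  have hw0 : 0 < w := by linarith
  have hlog_succ : log (w + 1) ≤ log w + w⁻¹ := by
    have h := log_le_sub_one_of_pos (x := (w + 1) / w) (by positivity)
    rw [log_div (by positivity) hw0.ne'] at h
    have : (w + 1) / w - 1 = w⁻¹ := by field_simp; ring
    linarith
  have hlog := one_sub_inv_le_log_of_pos hw0
  calc (w - 1) * log (w + 1) ≤ (w - 1) * (log w + w⁻¹) :=
        mul_le_mul_of_nonneg_left hlog_succ (by linarith)
    _ = (w - 1) * log w + (1 - w⁻¹) := by field_simp
    _ ≤ w * log w := by linarith

noncomputable def pairEntropyRatio (x : ℝ) : ℝ := (x + x⁻¹) * log (x ^ 2 + 1) - 2 * x * log x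

lemma mul_pairEntropyRatio {x : ℝ} (hx : x ≠ 0) :
    x * pairEntropyRatio x = pairEntropy (x ^ 2) 1 := by
  simp only [pairEntropyRatio, pairEntropy, log_pow, log_one]
  field_simp
  ring

lemma pairEntropyRatio_one : pairEntropyRatio 1 = 2 * log 2 := by
  norm_num [pairEntropyRatio]

lemma hasDerivAt_pairEntropyRatio {x : ℝ} (hx : 0 < x) :
    HasDerivAt pairEntropyRatio ((1 - (x ^ 2)⁻¹) * log (x ^ 2 + 1) - 2 * log x) x := by
  have h₁ := (hasDerivAt_id' x).fun_add (hasDerivAt_inv hx.ne')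
  have h₂ := ((hasDerivAt_pow 2 x).add_const 1).log (by positivity)
  have h₃ := ((hasDerivAt_id' x).const_mul 2).fun_mul (hasDerivAt_log hx.ne')
  refine ((h₁.fun_mul h₂).fun_sub h₃).congr_deriv ?_
  field_simp
  ring

lemma pairEntropyRatio_deriv_nonpos {x : ℝ} (hx : 1 ≤ x) :
    (1 - (x ^ 2)⁻¹) * log (x ^ 2 + 1) - 2 * log x ≤ 0 := by
  have hx0 : x ≠ 0 := by positivity
  have hw := sub_one_mul_log_add_one_le (w := x ^ 2) (by nlinarith)
  rw [log_pow] at hw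
  have hdiv : (1 - (x ^ 2)⁻¹) * log (x ^ 2 + 1) - 2 * log x
      = ((x ^ 2 - 1) * log (x ^ 2 + 1) - x ^ 2 * (2 * log x)) / x ^ 2 := by
    field_simp
  rw [hdiv]
  exact div_nonpos_of_nonpos_of_nonneg (by push_cast at hw; linarith) (by positivity)

lemma antitoneOn_pairEntropyRatio : AntitoneOn pairEntropyRatio (Set.Ici 1) := by
  refine antitoneOn_of_hasDerivWithinAt_nonpos (convex_Ici 1)
    (f' := fun x => (1 - (x ^ 2)⁻¹) * log (x ^ 2 + 1) - 2 * log x) ?_ ?_ ?_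
  · exact fun x hx => (hasDerivAt_pairEntropyRatio (by linarith [Set.mem_Ici.mp hx]))
      |>.continuousAt.continuousWithinAt
  · intro x hx
    rw [interior_Ici] at hx
    exact (hasDerivAt_pairEntropyRatio (by linarith [Set.mem_Ioi.mp hx])).hasDerivWithinAt
  · intro x hx
    rw [interior_Ici] at hx
    exact pairEntropyRatio_deriv_nonpos (Set.mem_Ioi.mp hx).le

lemma pairEntropy_sq_one_le {x : ℝ} (hx : 1 ≤ x) : pairEntropy (x ^ 2) 1 ≤ 2 * log 2 * x := by
  have hratio : pairEntropyRatio x ≤ 2 * log 2 :=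
    pairEntropyRatio_one ▸ antitoneOn_pairEntropyRatio Set.self_mem_Ici hx hx
  rw [← mul_pairEntropyRatio (by positivity), mul_comm]
  exact mul_le_mul_of_nonneg_right hratio (by linarith)

lemma pairEntropy_le_of_le {a b : ℝ} (hb : 0 < b) (hba : b ≤ a) :
    pairEntropy a b ≤ 2 * log 2 * √(a * b) := by
  obtain ⟨x, hx, rfl⟩ : ∃ x, 1 ≤ x ∧ a = b * x ^ 2 :=
    ⟨√(a / b), one_le_sqrt.mpr ((one_le_div hb).mpr hba),
      by rw [sq_sqrt (div_pos (hb.trans_le hba) hb).le]; field_simp⟩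
  have hsqrt : √(b * x ^ 2 * b) = b * x := by
    rw [show b * x ^ 2 * b = (b * x) ^ 2 by ring, sqrt_sq (by positivity)]
  calc pairEntropy (b * x ^ 2) b = b * pairEntropy (x ^ 2) 1 := by
        rw [← pairEntropy_mul_mul, mul_one]
    _ ≤ b * (2 * log 2 * x) := mul_le_mul_of_nonneg_left (pairEntropy_sq_one_le hx) hb.le
    _ = 2 * log 2 * √(b * x ^ 2 * b) := by rw [hsqrt]; ring

lemma pairEntropy_le {a b : ℝ} (ha : 0 < a) (hb : 0 < b) :
    pairEntropy a b ≤ 2 * log 2 * √(a * b) := by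
  rcases le_total b a with hba | hab
  · exact pairEntropy_le_of_le hb hba
  · rw [pairEntropy_comm, mul_comm a b]
    exact pairEntropy_le_of_le ha hab

lemma one_div_le_mul_of_pairEntropy_eq_one {a b : ℝ} (ha : 0 < a) (hb : 0 < b)
    (h : pairEntropy a b = 1) : 1 / (4 * log 2 ^ 2) ≤ a * b := by
  have hbound := pairEntropy_le ha hb
  rw [h] at hbound
  have hsq : (2 * log 2 * √(a * b)) ^ 2 = 4 * log 2 ^ 2 * (a * b) := by
    rw [mul_pow, sq_sqrt (mul_pos ha hb).le]
    ring
  rw [div_le_iff₀ (by positivity), mul_comm, ← hsq]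
  exact one_le_pow₀ hbound

/-- With `α = β = 1/(2 log 2)`, we have `(α+β)log(α+β) − α log α − β log β = 1`, and
among all positive `α', β'` with `(α'+β')log(α'+β') − α' log α' − β' log β' = 1`, the
product `α'·β'` is minimized at `α·β = 1/(4(log 2)²)`. -/
theorem stmt_11 (α β : ℝ) (hα : α = 1 / (2 * Real.log 2)) (hβ : β = 1 / (2 * Real.log 2)) :
    (α + β) * Real.log (α + β) - α * Real.log α - β * Real.log β = 1 ∧
      α * β = 1 / (4 * (Real.log 2) ^ 2) ∧
      ∀ α' β' : ℝ, 0 < α' → 0 < β' →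
        (α' + β') * Real.log (α' + β') - α' * Real.log α' - β' * Real.log β' = 1 →
          α' * β' ≥ α * β := by
  have hlog2 : log 2 ≠ 0 := (log_pos one_lt_two).ne'
  have hαβ : α * β = 1 / (4 * log 2 ^ 2) := by
    rw [hα, hβ]
    field_simp
    ring
  refine ⟨?_, hαβ, fun α' β' hα' hβ' h => hαβ ▸ one_div_le_mul_of_pairEntropy_eq_one hα' hβ' h⟩
  change pairEntropy α β = 1
  rw [hβ, ← hα, pairEntropy_self, hα]
  field_simp
end

section
/- For n ≥ 6, r with 3 ≤ r ≤ n, and d such that C(d+r−1, r−1) > r·n, the exponent d·r can be bounded: choosing d minimal with C(d+r−1,r−1) > r·n yields d·r ≤ C·r²·n^{1/(r−1)} for an absolute constant C. -/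
/-!
Write `k = r - 1`. Minimality of `d ≥ 1` gives `C(d - 1 + k, k) ≤ r n`, and
`d ^ k ≤ k! · C(d - 1 + k, k) ≤ k ^ k · r n`, so `d ≤ k · (r n) ^ (1/k)`. Finally
`r ^ (1/k) ≤ 2` because `r = k + 1 ≤ 2 ^ k`, whence `d ≤ 2 r n ^ (1/k)`.
-/

open Nat in
theorem Nat.succ_pow_le_factorial_mul_choose (e k : ℕ) :
    (e + 1) ^ k ≤ k ! * (e + k).choose k := by
  rw [← descFactorial_eq_factorial_mul_choose]
  simpa [Nat.add_right_comm e k 1] using pow_sub_le_descFactorial (e + k) k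

theorem Real.le_mul_rpow_inv_of_pow_le_pow_mul {x a b : ℝ} {k : ℕ} (hx : 0 ≤ x) (ha : 0 ≤ a)
    (hb : 0 ≤ b) (hk : k ≠ 0) (h : x ^ k ≤ a ^ k * b) : x ≤ a * b ^ (k⁻¹ : ℝ) := by
  calc x = (x ^ k) ^ (k⁻¹ : ℝ) := (pow_rpow_inv_natCast hx hk).symm
    _ ≤ (a ^ k * b) ^ (k⁻¹ : ℝ) := by gcongr
    _ = a * b ^ (k⁻¹ : ℝ) := by
      rw [mul_rpow (by positivity) hb, pow_rpow_inv_natCast ha hk]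

theorem Real.natCast_add_one_rpow_inv_le_two (k : ℕ) :
    ((k : ℝ) + 1) ^ (k⁻¹ : ℝ) ≤ 2 := by
  rcases Nat.eq_zero_or_pos k with rfl | hk
  · norm_num
  rw [rpow_inv_le_iff_of_pos (by positivity) zero_le_two (by positivity), rpow_natCast]
  exact_mod_cast Nat.lt_two_pow_self

theorem succ_le_mul_rpow_inv_of_choose_le {e k m : ℕ} (hk : k ≠ 0)
    (h : (e + k).choose k ≤ m) : ((e + 1 : ℕ) : ℝ) ≤ k * (m : ℝ) ^ (k⁻¹ : ℝ) := by
  have hpow : (e + 1) ^ k ≤ k ^ k * m :=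
    (Nat.succ_pow_le_factorial_mul_choose e k).trans
      (Nat.mul_le_mul (Nat.factorial_le_pow k) h)
  exact Real.le_mul_rpow_inv_of_pow_le_pow_mul (by positivity) (by positivity) (by positivity) hk
    (by exact_mod_cast hpow)

/-- For `n ≥ 6`, `3 ≤ r ≤ n`, and `d` minimal with `C(d+r−1, r−1) > r·n`, the
exponent `d·r` is at most `C·r²·n^{1/(r−1)}` for an absolute constant `C`. -/
theorem stmt_18 :
    ∃ C : ℝ, 0 < C ∧ ∀ n r d : ℕ, 6 ≤ n → 3 ≤ r → r ≤ n →
      Nat.choose (d + r - 1) (r - 1) > r * n →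
      (∀ d' : ℕ, d' < d → ¬ (Nat.choose (d' + r - 1) (r - 1) > r * n)) →
      (d : ℝ) * r ≤ C * r ^ 2 * (n : ℝ) ^ (1 / ((r : ℝ) - 1)) := by
  refine ⟨2, two_pos, fun n r d _ hr _ _ hmin => ?_⟩
  obtain ⟨k, rfl⟩ : ∃ k, r = k + 1 := ⟨r - 1, by omega⟩
  have hexp : 1 / (((k + 1 : ℕ) : ℝ) - 1) = (k⁻¹ : ℝ) := by push_cast; ring
  rw [hexp]
  rcases d with _ | e
  · simp only [Nat.cast_zero, zero_mul]
    positivity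
  have hchoose : (e + k).choose k ≤ (k + 1) * n := by
    simpa [Nat.add_sub_cancel, ← add_assoc] using hmin e (lt_add_one e)
  have hd := succ_le_mul_rpow_inv_of_choose_le (by omega) hchoose
  have hsplit : (((k + 1) * n : ℕ) : ℝ) ^ (k⁻¹ : ℝ) =
      ((k : ℝ) + 1) ^ (k⁻¹ : ℝ) * n ^ (k⁻¹ : ℝ) := by
    push_cast
    exact Real.mul_rpow (by positivity) (by positivity)
  rw [hsplit] at hd
  have htwo := Real.natCast_add_one_rpow_inv_le_two k
  push_cast at hd ⊢
  calc ((e : ℝ) + 1) * (k + 1)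
        ≤ k * (((k : ℝ) + 1) ^ (k⁻¹ : ℝ) * n ^ (k⁻¹ : ℝ)) * (k + 1) := by gcongr
    _ ≤ (k + 1) * (2 * n ^ (k⁻¹ : ℝ)) * (k + 1) := by gcongr; linarith
    _ = 2 * ((k : ℝ) + 1) ^ 2 * (n : ℝ) ^ (k⁻¹ : ℝ) := by ring
end
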